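/- Let 𝒜 be a van Hove sequence and f ∈ C_u(G). Then the following are equivalent: (i) f is mean almost periodic with respect to 𝒜; (ii) there exists some p ≥ 1 such that for each ε > 0 the set {t ∈ G : ‖f − τ_t f‖_{b,p,𝒜} < ε} is relatively dense; (iii) for all p ≥ 1 and each ε > 0 the set {t ∈ G : ‖f − τ_t f‖_{b,p,𝒜} < ε} is relatively dense. -/

import Mathlib

/-! For `g` bounded by `M`, Hölder's inequality on each normalised average gives
`‖g‖_{b,1} ≤ ‖g‖_{b,p}`, while `|g|^p ≤ M^(p-1) |g|` gives `‖g‖_{b,p}^p ≤ M^(p-1) ‖g‖_{b,1}`.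
Applied to `g = f - τ_t f`, which is bounded since `f` is, the sets of `ε`-almost periods for
the exponents `1` and `p` contain one another up to a change of `ε`, and relative density
passes to supersets. -/

open MeasureTheory Filter Topology
open scoped ENNReal Pointwise

noncomputable section

namespace MAP

section Defs

variable {G : Type*} [MeasurableSpace G] [TopologicalSpace G] [AddCommGroup G]

/-- The `K`-boundary `∂^K A` of a set `A`. -/
def kBoundary (K A : Set G) : Set G :=
  (closure (A + K) \ A) ∪ ((Aᶜ - K) ∩ closure A)

/-- A van Hove sequence: nonempty relatively compact open sets whose `K`-boundaries
become negligible compared to their volume. -/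
structure IsVanHove (θ : Measure G) (A : ℕ → Set G) : Prop where
  isOpen : ∀ n, IsOpen (A n)
  nonempty : ∀ n, (A n).Nonempty
  relCompact : ∀ n, IsCompact (closure (A n))
  boundary : ∀ K : Set G, IsCompact K →
    Tendsto (fun n => θ (kBoundary K (A n)) / θ (A n)) atTop (𝓝 0)

/-- `(1/θ(A)) ∫_A |f|^p`, valued in `ℝ≥0∞`. -/
def lpAvg (θ : Measure G) (A : Set G) (p : ℝ) (f : G → ℂ) : ℝ≥0∞ :=
  (∫⁻ t in A, ENNReal.ofReal (‖f t‖ ^ p) ∂θ) / θ A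

/-- The Besicovitch seminorm `‖f‖_{b,p,𝒜}`. -/
def besSN (θ : Measure G) (A : ℕ → Set G) (p : ℝ) (f : G → ℂ) : ℝ≥0∞ :=
  (limsup (fun n => lpAvg θ (A n) p f) atTop) ^ (1 / p)

/-- The Weyl seminorm `‖f‖_{w,p,𝒜}`. -/
def weylSN (θ : Measure G) (A : ℕ → Set G) (p : ℝ) (f : G → ℂ) : ℝ≥0∞ :=
  (limsup (fun n => ⨆ x : G, lpAvg θ (x +ᵥ A n) p f) atTop) ^ (1 / p)

/-- Membership in `L^p_loc`. -/
def MemLpLoc (θ : Measure G) (p : ℝ) (f : G → ℂ) : Prop :=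
  AEStronglyMeasurable f θ ∧
    ∀ K : Set G, IsCompact K → (∫⁻ t in K, ENNReal.ofReal (‖f t‖ ^ p) ∂θ) < ⊤

/-- A relatively dense subset of `G`. -/
def RelDense (S : Set G) : Prop :=
  ∃ K : Set G, IsCompact K ∧ ∀ g : G, ∃ t ∈ S, g - t ∈ K

/-- Mean almost periodicity of a function with respect to a van Hove sequence. -/
def MeanAP (θ : Measure G) (A : ℕ → Set G) (f : G → ℂ) : Prop :=
  ∀ ε : ℝ, 0 < ε →
    RelDense {t : G | besSN θ A 1 (fun s => f s - f (s - t)) < ENNReal.ofReal ε}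

/-- `C_c(G)`: continuous compactly supported functions. -/
def IsCc (φ : G → ℂ) : Prop := Continuous φ ∧ HasCompactSupport φ

/-- `(1/θ(A)) ∫_A f`, valued in `ℂ`. -/
def cAvg (θ : Measure G) (A : Set G) (f : G → ℂ) : ℂ :=
  (∫ t in A, f t ∂θ) / ((θ A).toReal : ℂ)

/-- `(1/θ(A)) ∫_{s+A} f`, valued in `ℂ`. -/
def shiftAvg (θ : Measure G) (A : Set G) (s : G) (f : G → ℂ) : ℂ :=
  (∫ t in s +ᵥ A, f t ∂θ) / ((θ A).toReal : ℂ)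

/-- `(1/θ(A)) ∫_{s+A} f` for a real-valued `f`. -/
def shiftAvgR (θ : Measure G) (A : Set G) (s : G) (f : G → ℝ) : ℝ :=
  (∫ t in s +ᵥ A, f t ∂θ) / (θ A).toReal

/-- The mean `M_𝒜(f)` exists and equals `c`. -/
def MeanTendsto (θ : Measure G) (A : ℕ → Set G) (f : G → ℂ) (c : ℂ) : Prop :=
  Tendsto (fun n => cAvg θ (A n) f) atTop (𝓝 c)

/-- The Dirac comb of a point set. -/
def diracComb (Λ : Set G) : Measure G := Measure.sum fun x : Λ => Measure.dirac (x : G)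

/-- Convolution `(μ * φ)(t) = ∫ φ(t - s) dμ(s)` of a positive measure with a function. -/
def convM (μ : Measure G) (φ : G → ℂ) : G → ℂ := fun t => ∫ s, φ (t - s) ∂μ

/-- Uniform discreteness of a point set. -/
def UnifDiscrete (Λ : Set G) : Prop :=
  ∃ U : Set G, IsOpen U ∧ (0 : G) ∈ U ∧
    ∀ x ∈ Λ, ∀ y ∈ Λ, x ≠ y → (x +ᵥ U) ∩ (y +ᵥ U) = ∅

/-- Delone sets: uniformly discrete and relatively dense. -/
def IsDelone (Λ : Set G) : Prop := UnifDiscrete Λ ∧ RelDense Λ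

end Defs

section CharDefs

variable (G : Type*) [TopologicalSpace G] [AddCommGroup G]

/-- The set of continuous characters of `G`, inside `C(G, ℂ)`. -/
def CharSet : Set C(G, ℂ) :=
  {χ | (∀ x, ‖χ x‖ = 1) ∧ ∀ x y, χ (x + y) = χ x * χ y}

/-- The dual group `Ĝ` of continuous characters, with the compact-open topology. -/
abbrev Char : Type _ := ↥(CharSet G)

instance : MeasurableSpace (Char G) := borel _

instance : BorelSpace (Char G) := ⟨rfl⟩

end CharDefs

section CharUse

variable {G : Type*} [MeasurableSpace G] [TopologicalSpace G] [AddCommGroup G]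

/-- Trigonometric polynomials: finite linear combinations of characters. -/
def IsTrigPoly (P : G → ℂ) : Prop :=
  ∃ (n : ℕ) (c : Fin n → ℂ) (χ : Fin n → Char G),
    P = fun x => ∑ i, c i * ((χ i : C(G, ℂ)) x)

/-- Besicovitch `p`-almost periodicity of a function. -/
def BapMem (θ : Measure G) (A : ℕ → Set G) (p : ℝ) (f : G → ℂ) : Prop :=
  MemLpLoc θ p f ∧ ∀ ε : ℝ, 0 < ε →
    ∃ P : G → ℂ, IsTrigPoly P ∧ besSN θ A p (fun x => f x - P x) < ENNReal.ofReal ε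

/-- Weyl `p`-almost periodicity of a function. -/
def WapMem (θ : Measure G) (A : ℕ → Set G) (p : ℝ) (f : G → ℂ) : Prop :=
  MemLpLoc θ p f ∧ ∀ ε : ℝ, 0 < ε →
    ∃ P : G → ℂ, IsTrigPoly P ∧ weylSN θ A p (fun x => f x - P x) < ENNReal.ofReal ε

/-- The Fourier–Bohr coefficient of `f` at `χ` along `A` exists and equals `a`. -/
def FBTendsto (θ : Measure G) (A : ℕ → Set G) (f : G → ℂ) (χ : Char G) (a : ℂ) : Prop :=
  MeanTendsto θ A (fun t => (starRingEnd ℂ) ((χ : C(G, ℂ)) t) * f t) a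

/-- `φ̌(χ) = ∫ χ(t) φ(t) dt`. -/
def checkFn (θ : Measure G) (φ : G → ℂ) (χ : Char G) : ℂ :=
  ∫ t, (χ : C(G, ℂ)) t * φ t ∂θ

/-- `(φ * ψ̃)(x) = ∫ φ(x - y) conj(ψ(-y)) dy`. -/
def tildeConv (θ : Measure G) (φ ψ : G → ℂ) : G → ℂ :=
  fun x => ∫ y, φ (x - y) * (starRingEnd ℂ) (ψ (-y)) ∂θ

/-- A pure point measure. -/
def PurePointM {X : Type*} [MeasurableSpace X] (σ : Measure X) : Prop :=
  ∀ B : Set X, MeasurableSet B → σ B = ∑' x : B, σ {(x : X)}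

end CharUse

section TB

variable (Γ : Type*) [MeasurableSpace Γ] [TopologicalSpace Γ] [AddCommGroup Γ]

/-- A translation bounded complex (Radon) measure, given by its total variation
measure together with a unimodular density (polar decomposition). -/
structure TBMeasure where
  tv : Measure Γ
  dens : Γ → ℂ
  dens_meas : Measurable dens
  dens_norm : ∀ x, ‖dens x‖ = 1
  bounded : ∀ K : Set Γ, IsCompact K → ∃ C : ℝ≥0∞, C ≠ ⊤ ∧ ∀ t : Γ, tv (t +ᵥ K) ≤ C

end TB

section TBUse

variable {G : Type*} [MeasurableSpace G] [TopologicalSpace G] [AddCommGroup G]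

/-- `∫ f dμ` for a translation bounded complex measure. -/
def TBMeasure.integral (μ : TBMeasure G) (f : G → ℂ) : ℂ := ∫ x, f x * μ.dens x ∂μ.tv

/-- `(μ * φ)(t) = ∫ φ(t - s) dμ(s)`. -/
def TBMeasure.conv (μ : TBMeasure G) (φ : G → ℂ) : G → ℂ :=
  fun t => ∫ s, φ (t - s) * μ.dens s ∂μ.tv

/-- `(1/θ(A_n)) · (μ|_{A_n} * ν̃|_{-A_n})(φ)`, the `n`-th Eberlein pairing of `μ` with `ν̃`. -/
def ebPair (θ : Measure G) (A : ℕ → Set G) (μ ν : TBMeasure G) (φ : G → ℂ) (n : ℕ) : ℂ :=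
  (∫ s in A n, ∫ u in A n, φ (s - u) * μ.dens s * (starRingEnd ℂ) (ν.dens u) ∂ν.tv ∂μ.tv) /
    ((θ (A n)).toReal : ℂ)

/-- Fourier–Bohr coefficient of a translation bounded measure along `A`. -/
def FBTendstoM (θ : Measure G) (A : ℕ → Set G) (μ : TBMeasure G) (χ : Char G) (a : ℂ) : Prop :=
  Tendsto (fun n =>
      (∫ t in A n, (starRingEnd ℂ) ((χ : C(G, ℂ)) t) * μ.dens t ∂μ.tv) /
        ((θ (A n)).toReal : ℂ))
    atTop (𝓝 a)

/-- `σ` is the Fourier transform of the positive definite measure `γ`: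
`∫_{Ĝ} |φ̌|² dσ = ∫_G (φ * φ̃) dγ` for all `φ ∈ C_c(G)`. -/
def IsFTOf (θ : Measure G) (γ : TBMeasure G) (σ : Measure (Char G)) : Prop :=
  ∀ φ : G → ℂ, IsCc φ → ∃ r : ℝ, 0 ≤ r ∧
    γ.integral (tildeConv θ φ φ) = (r : ℂ) ∧
    (∫⁻ χ, ENNReal.ofReal (‖checkFn θ φ χ‖ ^ 2) ∂σ) = ENNReal.ofReal r

end TBUse

section UniformDefs

variable {H : Type*} [UniformSpace H]

/-- `C_u(G)`: bounded uniformly continuous functions. -/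
def CuFun (f : H → ℂ) : Prop := UniformContinuous f ∧ ∃ C : ℝ, ∀ x, ‖f x‖ ≤ C

/-- Bohr (strong) almost periodicity. -/
def BohrAP [AddCommGroup H] (f : H → ℂ) : Prop :=
  CuFun f ∧ ∀ ε : ℝ, 0 < ε → RelDense {t : H | ∀ x, ‖f x - f (x - t)‖ ≤ ε}

end UniformDefs

end MAP

open MAP

theorem Real.rpow_le_rpow_sub_one_mul {a M p : ℝ} (ha : 0 ≤ a) (haM : a ≤ M) (hp : 1 ≤ p) :
    a ^ p ≤ M ^ (p - 1) * a := calc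
  a ^ p = a ^ (p - 1) * a := by
    rw [← Real.rpow_add_one' ha (by linarith), sub_add_cancel]
  _ ≤ M ^ (p - 1) * a := by gcongr

namespace MAP

theorem RelDense.mono {G : Type*} [TopologicalSpace G] [AddCommGroup G] {S T : Set G}
    (h : RelDense S) (hST : S ⊆ T) : RelDense T := by
  obtain ⟨K, hK, hSK⟩ := h
  exact ⟨K, hK, fun g => (hSK g).imp fun t ht => ⟨hST ht.1, ht.2⟩⟩

section Averages

variable {G : Type*} [MeasurableSpace G] {θ : Measure G} {B : Set G} {p : ℝ} {g : G → ℂ}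

theorem lpAvg_eq_eLpNorm'_rpow (hp : 0 < p) :
    lpAvg θ B p g = eLpNorm' g p ((θ B)⁻¹ • θ.restrict B) ^ p := by
  rw [lpAvg, eLpNorm'_eq_lintegral_enorm, ← ENNReal.rpow_mul, one_div_mul_cancel hp.ne',
    ENNReal.rpow_one, lintegral_smul_measure, smul_eq_mul, ENNReal.div_eq_inv_mul]
  congr 1
  refine lintegral_congr fun t => ?_
  rw [← ofReal_norm, ENNReal.ofReal_rpow_of_nonneg (norm_nonneg _) hp.le]

theorem lpAvg_one_le_lpAvg_rpow (hp : 1 ≤ p) (hB0 : θ B ≠ 0) (hBtop : θ B ≠ ⊤)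
    (hg : AEStronglyMeasurable g (θ.restrict B)) :
    lpAvg θ B 1 g ≤ lpAvg θ B p g ^ (1 / p) := by
  have hp0 : 0 < p := zero_lt_one.trans_le hp
  have : IsProbabilityMeasure ((θ B)⁻¹ • θ.restrict B) :=
    ⟨by simp [ENNReal.inv_mul_cancel hB0 hBtop]⟩
  rw [lpAvg_eq_eLpNorm'_rpow one_pos, lpAvg_eq_eLpNorm'_rpow hp0, ENNReal.rpow_one,
    ← ENNReal.rpow_mul, mul_one_div_cancel hp0.ne', ENNReal.rpow_one]
  exact eLpNorm'_le_eLpNorm'_of_exponent_le one_pos hp _ (hg.smul_measure _)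

theorem lpAvg_le_mul_lpAvg_one {M : ℝ} (hp : 1 ≤ p) (hg : ∀ s, ‖g s‖ ≤ M) :
    lpAvg θ B p g ≤ ENNReal.ofReal (M ^ (p - 1)) * lpAvg θ B 1 g := by
  rw [lpAvg, lpAvg, ← mul_div_assoc, ← lintegral_const_mul' _ _ ENNReal.ofReal_ne_top]
  gcongr with t
  rw [← ENNReal.ofReal_mul (Real.rpow_nonneg ((norm_nonneg _).trans (hg t)) _), Real.rpow_one]
  exact ENNReal.ofReal_le_ofReal (Real.rpow_le_rpow_sub_one_mul (norm_nonneg _) (hg t) hp)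

theorem besSN_one_eq {A : ℕ → Set G} :
    besSN θ A 1 g = limsup (fun n => lpAvg θ (A n) 1 g) atTop := by
  rw [besSN, div_one, ENNReal.rpow_one]

theorem besSN_rpow_eq {A : ℕ → Set G} (hp : 0 < p) :
    besSN θ A p g ^ p = limsup (fun n => lpAvg θ (A n) p g) atTop := by
  rw [besSN, ← ENNReal.rpow_mul, one_div_mul_cancel hp.ne', ENNReal.rpow_one]

theorem besSN_one_le_besSN {A : ℕ → Set G} (hp : 1 ≤ p) (hA0 : ∀ n, θ (A n) ≠ 0)
    (hAtop : ∀ n, θ (A n) ≠ ⊤) (hg : AEStronglyMeasurable g θ) :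
    besSN θ A 1 g ≤ besSN θ A p g := by
  have hp0 : 0 < 1 / p := one_div_pos.2 (zero_lt_one.trans_le hp)
  rw [besSN_one_eq, besSN, ← ENNReal.orderIsoRpow_apply _ hp0,
    (ENNReal.orderIsoRpow _ hp0).limsup_apply]
  exact limsup_le_limsup (Eventually.of_forall fun n =>
    lpAvg_one_le_lpAvg_rpow hp (hA0 n) (hAtop n) hg.restrict)

theorem besSN_rpow_le_mul_besSN_one {A : ℕ → Set G} {M : ℝ} (hp : 1 ≤ p)
    (hg : ∀ s, ‖g s‖ ≤ M) :
    besSN θ A p g ^ p ≤ ENNReal.ofReal (M ^ (p - 1)) * besSN θ A 1 g := by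
  rw [besSN_rpow_eq (zero_lt_one.trans_le hp), besSN_one_eq,
    ← ENNReal.limsup_const_mul_of_ne_top ENNReal.ofReal_ne_top]
  exact limsup_le_limsup (Eventually.of_forall fun n => lpAvg_le_mul_lpAvg_one hp hg)

theorem besSN_lt_of_besSN_one_lt {A : ℕ → Set G} {M ε : ℝ} (hM : 0 < M) (hp : 1 ≤ p)
    (hε : 0 < ε) (hg : ∀ s, ‖g s‖ ≤ M)
    (h : besSN θ A 1 g < ENNReal.ofReal (ε ^ p / M ^ (p - 1))) :
    besSN θ A p g < ENNReal.ofReal ε := by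
  have hp0 : 0 < p := zero_lt_one.trans_le hp
  have hMp : 0 < M ^ (p - 1) := Real.rpow_pos_of_pos hM _
  rw [← ENNReal.rpow_lt_rpow_iff hp0, ENNReal.ofReal_rpow_of_pos hε]
  calc besSN θ A p g ^ p ≤ ENNReal.ofReal (M ^ (p - 1)) * besSN θ A 1 g :=
        besSN_rpow_le_mul_besSN_one hp hg
    _ < ENNReal.ofReal (M ^ (p - 1)) * ENNReal.ofReal (ε ^ p / M ^ (p - 1)) :=
        ENNReal.mul_lt_mul_right (ENNReal.ofReal_pos.2 hMp).ne' ENNReal.ofReal_ne_top h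
    _ = ENNReal.ofReal (ε ^ p) := by
        rw [← ENNReal.ofReal_mul hMp.le, mul_div_cancel₀ _ hMp.ne']

end Averages

section VanHove

variable {G : Type*} [MeasurableSpace G] [TopologicalSpace G] [AddCommGroup G]
  {θ : Measure G} {A : ℕ → Set G}

theorem IsVanHove.measure_ne_zero [θ.IsOpenPosMeasure] (hA : IsVanHove θ A) (n : ℕ) :
    θ (A n) ≠ 0 :=
  ((hA.isOpen n).measure_pos θ (hA.nonempty n)).ne'

theorem IsVanHove.measure_ne_top [IsFiniteMeasureOnCompacts θ] (hA : IsVanHove θ A) (n : ℕ) :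
    θ (A n) ≠ ⊤ :=
  (measure_mono_top subset_closure).mt (hA.relCompact n).measure_lt_top.ne

end VanHove

theorem CuFun.exists_pos_norm_sub_translate_le {G : Type*} [UniformSpace G] [AddGroup G]
    {f : G → ℂ} (hf : CuFun f) :
    ∃ M > 0, ∀ t s : G, ‖f s - f (s - t)‖ ≤ M := by
  obtain ⟨C, hC⟩ := hf.2
  refine ⟨2 * C + 1, by linarith [(norm_nonneg _).trans (hC 0)], fun t s => ?_⟩
  linarith [norm_sub_le (f s) (f (s - t)), hC s, hC (s - t)]

end MAP

theorem statement3_general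
    {G : Type*} [AddCommGroup G] [UniformSpace G] [IsUniformAddGroup G]
    [MeasurableSpace G] [BorelSpace G]
    (θ : Measure G) [θ.IsAddHaarMeasure]
    (A : ℕ → Set G) (hA : IsVanHove θ A)
    (f : G → ℂ) (hf : CuFun f) :
    (MeanAP θ A f ↔
      ∃ p : ℝ, 1 ≤ p ∧ ∀ ε : ℝ, 0 < ε →
        RelDense {t : G | besSN θ A p (fun s => f s - f (s - t)) < ENNReal.ofReal ε}) ∧
    (MeanAP θ A f ↔
      ∀ p : ℝ, 1 ≤ p → ∀ ε : ℝ, 0 < ε →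
        RelDense {t : G | besSN θ A p (fun s => f s - f (s - t)) < ENNReal.ofReal ε}) := by
  obtain ⟨M, hM, hbound⟩ := hf.exists_pos_norm_sub_translate_le
  have hmeas (t : G) : AEStronglyMeasurable (fun s => f s - f (s - t)) θ :=
    (hf.1.continuous.sub (hf.1.continuous.comp (continuous_sub_right t))).aestronglyMeasurable
  have of_exponent (p : ℝ) (hp : 1 ≤ p) (h : ∀ ε : ℝ, 0 < ε →
      RelDense {t : G | besSN θ A p (fun s => f s - f (s - t)) < ENNReal.ofReal ε}) :
      MeanAP θ A f := fun ε hε => (h ε hε).mono fun t ht =>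
    (besSN_one_le_besSN hp hA.measure_ne_zero hA.measure_ne_top (hmeas t)).trans_lt ht
  have to_exponent (h : MeanAP θ A f) (p : ℝ) (hp : 1 ≤ p) (ε : ℝ) (hε : 0 < ε) :
      RelDense {t : G | besSN θ A p (fun s => f s - f (s - t)) < ENNReal.ofReal ε} :=
    (h _ (by positivity)).mono fun t ht => besSN_lt_of_besSN_one_lt hM hp hε (hbound t) ht
  exact ⟨⟨fun h => ⟨1, le_rfl, h⟩, fun ⟨p, hp, h⟩ => of_exponent p hp h⟩,
    ⟨to_exponent, fun h => of_exponent 1 le_rfl (h 1 le_rfl)⟩⟩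

theorem statement3
    {G : Type*} [AddCommGroup G] [UniformSpace G] [IsUniformAddGroup G]
    [LocallyCompactSpace G] [SigmaCompactSpace G] [T2Space G]
    [MeasurableSpace G] [BorelSpace G]
    (θ : Measure G) [θ.IsAddHaarMeasure]
    (A : ℕ → Set G) (hA : IsVanHove θ A)
    (f : G → ℂ) (hf : CuFun f) :
    (MeanAP θ A f ↔
      ∃ p : ℝ, 1 ≤ p ∧ ∀ ε : ℝ, 0 < ε →
        RelDense {t : G | besSN θ A p (fun s => f s - f (s - t)) < ENNReal.ofReal ε}) ∧
    (MeanAP θ A f ↔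
      ∀ p : ℝ, 1 ≤ p → ∀ ε : ℝ, 0 < ε →
        RelDense {t : G | besSN θ A p (fun s => f s - f (s - t)) < ENNReal.ofReal ε}) :=
  statement3_general θ A hA f hf
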